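/- Let k ≥ 3 be a real number (or an integer), let s = √(k(k-2)), α = k - 1 + s, β = k - 1 - s, and for an integer i ≥ 0 define the real number m = (1/4)·(2 + ((k + s)/s)·α^i + ((-k + s)/s)·β^i). Then (k·m² - k·m + 2)/2 = (k/(16(k-2))) · ((-2k² + 18k - 32)/k + α^(2i+1) + β^(2i+1)). -/
import Mathlib


theorem centered_value_formula (k : ℝ) (hk : 3 ≤ k) (i : ℕ)
    (s α β m : ℝ) (hs : s = Real.sqrt (k * (k - 2)))
    (hα : α = k - 1 + s) (hβ : β = k - 1 - s)
    (hm : m = (1 / 4) * (2 + ((k + s) / s) * α ^ i + ((-k + s) / s) * β ^ i)) :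
    (k * m ^ 2 - k * m + 2) / 2 =
      (k / (16 * (k - 2))) *
        ((-2 * k ^ 2 + 18 * k - 32) / k + α ^ (2 * i + 1) + β ^ (2 * i + 1)) := by
  have hkpos : (0:ℝ) < k := by linarith
  have hk2 : (0:ℝ) < k - 2 := by linarith
  have hknn : (0:ℝ) ≤ k * (k - 2) := by nlinarith
  have hs2 : s ^ 2 = k * (k - 2) := by rw [hs]; exact Real.sq_sqrt hknn
  have hspos : 0 < s := by
    rw [hs]; apply Real.sqrt_pos.mpr; nlinarith
  have hsne : s ≠ 0 := ne_of_gt hspos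
  have hkne : k ≠ 0 := ne_of_gt hkpos
  have hk2ne : k - 2 ≠ 0 := ne_of_gt hk2
  set A := α ^ i with hA
  set B := β ^ i with hB
  have hAB : A * B = 1 := by
    rw [hA, hB, ← mul_pow]
    have : α * β = 1 := by rw [hα, hβ]; linear_combination -hs2
    rw [this, one_pow]
  have hαpow : α ^ (2 * i + 1) = α * A ^ 2 := by rw [hA]; ring
  have hβpow : β ^ (2 * i + 1) = β * B ^ 2 := by rw [hB]; ring
  set T := (k + s) * A + (s - k) * B with hT
  have hm' : m = (2 * s + T) / (4 * s) := by
    rw [hm, hT]; field_simp; ring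
  have h1 : (k + s) ^ 2 = 2 * k * α := by rw [hα]; linear_combination hs2
  have h2 : (s - k) ^ 2 = 2 * k * β := by rw [hβ]; linear_combination hs2
  have hT2 : T ^ 2 = 2 * k * (α * A ^ 2 + β * B ^ 2 - 2) := by
    rw [hT]
    linear_combination A ^ 2 * h1 + B ^ 2 * h2 + (2 * (s ^ 2 - k ^ 2)) * hAB + 2 * hs2
  have e1 : (k * m ^ 2 - k * m + 2) / 2 = k * T ^ 2 / (32 * s ^ 2) - k / 8 + 1 := by
    rw [hm']; field_simp; ring
  have e2 : k * T ^ 2 / (32 * s ^ 2) =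
      (k / (16 * (k - 2))) * (α * A ^ 2 + β * B ^ 2 - 2) := by
    rw [hT2, hs2]; field_simp; ring
  rw [e1, e2, hαpow, hβpow]
  field_simp
  ring
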